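/- Let κ be an infinite cardinal, let G be a connected κ-regular graph, and let T' be any family of κ forests without isolated vertices, each of order at most κ. Then T' packs into G, i.e., there exist pairwise edge-disjoint subgraphs of G, one isomorphic to each forest in T'. -/

import Mathlib

/-!
The copies can even be taken vertex-disjoint. The disjoint union of the forests has at most
`κ` vertices; enumerate them by `κ.ord.ToType` and rank a vertex `u` lexicographically by the
largest index on the root path to `u`, then the depth of `u`, then the index of `u`. In this
well-order a vertex is preceded by its parent but by none of its children, and by fewer than `κ`
vertices in total. A transfinite greedy embedding along it therefore always finds, among the `κ`
neighbours of the image of the parent, a vertex not used before.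
-/

open Cardinal

universe u

/-- `G` is `κ`-regular: every vertex has degree (neighbourhood cardinality) exactly `κ`. -/
def SimpleGraph.CardRegular {V : Type u} (G : SimpleGraph V) (κ : Cardinal.{u}) : Prop :=
  ∀ v : V, #(G.neighborSet v) = κ

/-- `G` has no isolated vertices. -/
def SimpleGraph.NoIsolatedVerts {V : Type u} (G : SimpleGraph V) : Prop :=
  ∀ v : V, ∃ w : V, G.Adj v w

/-- A factorization of `G`: a family of spanning subgraphs, pairwise edge-disjoint,
whose edge sets cover `E(G)`. -/
def SimpleGraph.IsFactorization {V : Type u} {ι : Type u} (G : SimpleGraph V)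
    (F : ι → SimpleGraph V) : Prop :=
  (∀ i, F i ≤ G) ∧ (Pairwise fun i j => Disjoint (F i).edgeSet (F j).edgeSet) ∧
    (⋃ i, (F i).edgeSet) = G.edgeSet

/-- In the forest `F` rooted at `v₀`, `u` is a child of `w`. -/
def SimpleGraph.IsChild {V : Type u} (F : SimpleGraph V) (v₀ u w : V) : Prop :=
  F.Adj w u ∧ F.Reachable v₀ u ∧ F.dist v₀ u = F.dist v₀ w + 1

/-- The graph with edges `v_j v_i` for `v_i ∈ C j`, `j < i`. -/
def childGraph {V I : Type u} [LT I] (v : I ≃ V) (C : I → Set V) : SimpleGraph V :=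
  SimpleGraph.fromEdgeSet {e | ∃ i j : I, j < i ∧ (v i : V) ∈ C j ∧ e = s(v j, v i)}

/-- Disjoint union of `ι`-many copies of `T`. -/
def copiesGraph (ι : Type u) {W : Type u} (T : SimpleGraph W) : SimpleGraph (ι × W) where
  Adj p q := p.1 = q.1 ∧ T.Adj p.2 q.2
  symm := ⟨by rintro p q ⟨h1, h2⟩; exact ⟨h1.symm, h2.symm⟩⟩
  loopless := ⟨by rintro p ⟨-, h⟩; exact T.loopless.irrefl _ h⟩

theorem WellFounded.exists_forall_mem_and_ne {U V : Type u} {κ : Cardinal.{u}}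
    {r : U → U → Prop} (hr : WellFounded r) (hsmall : ∀ u, #{u' // r u' u} < κ)
    (A : ∀ u, (∀ u', r u' u → V) → Set V) (hA : ∀ u g, κ ≤ #(A u g)) :
    ∃ f : U → V, ∀ u, f u ∈ A u (fun u' _ => f u') ∧ ∀ u', r u' u → f u' ≠ f u := by
  have hfree (u : U) (g : ∀ u', r u' u → V) : ∃ v ∈ A u g, ∀ u' h, g u' h ≠ v := by
    by_contra! hcon
    have hsub : A u g ⊆ Set.range fun p : {u' // r u' u} => g p.1 p.2 := fun v hv => by
      obtain ⟨u', h, rfl⟩ := hcon v hv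
      exact ⟨⟨u', h⟩, rfl⟩
    exact (hsmall u).not_ge ((hA u g).trans ((mk_le_mk_of_subset hsub).trans mk_range_le))
  choose step hstep using hfree
  refine ⟨hr.fix step, fun u => ?_⟩
  rw [hr.fix_eq step u]
  exact hstep u _

lemma Cardinal.mk_Iic_toType_ord_lt {κ : Cardinal.{u}} (hκ : ℵ₀ ≤ κ) (x : κ.ord.ToType) :
    #(Set.Iic x) < κ := by
  rw [← Set.Iio_union_right]
  refine (mk_union_le _ _).trans_lt (add_lt_of_lt hκ ?_ ?_)
  · simpa using mk_Iio_lt x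
  · simpa using one_lt_aleph0.trans_le hκ

lemma Cardinal.mk_sigma_le_of_le {ι : Type u} {W : ι → Type u} {κ : Cardinal.{u}} (hκ : ℵ₀ ≤ κ)
    (hι : #ι ≤ κ) (hW : ∀ i, #(W i) ≤ κ) : #(Σ i, W i) ≤ κ :=
  calc #(Σ i, W i) ≤ #ι * κ := by
        rw [mk_sigma]; exact (sum_le_sum _ _ hW).trans_eq (sum_const' _ _)
    _ ≤ κ * κ := by gcongr
    _ = κ := mul_eq_self hκ

namespace SimpleGraph

section RootPath

variable {X : Type*} (H : SimpleGraph X)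

noncomputable def root (a : X) : X := (H.connectedComponentMk a).out

lemma reachable_root (a : X) : H.Reachable (H.root a) a :=
  ConnectedComponent.eq.mp (Quot.out_eq _)

lemma root_eq_of_reachable {a b : X} (h : H.Reachable a b) : H.root a = H.root b := by
  rw [root, root, ConnectedComponent.eq.mpr h]

noncomputable def rootPath (a : X) : H.Path (H.root a) a := by
  classical exact (H.reachable_root a).some.toPath

variable {H}

lemma IsAcyclic.support_rootPath_of_notMem (hH : H.IsAcyclic) {a b : X} (h : H.Adj a b)
    (hb : b ∉ (H.rootPath a).1.support) :
    (H.rootPath b).1.support = (H.rootPath a).1.support ++ [b] := by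
  have hroot := H.root_eq_of_reachable h.reachable
  rw [(hH.subsingleton_path _ _).elim (H.rootPath b) ⟨((H.rootPath a).1.concat h).copy hroot rfl,
    by simpa using (H.rootPath a).2.concat hb h⟩]
  simp [Walk.support_concat]

lemma IsAcyclic.length_rootPath_lt (hH : H.IsAcyclic) {a b : X}
    (hb : b ∈ (H.rootPath a).1.support) (hne : b ≠ a) :
    (H.rootPath b).1.length < (H.rootPath a).1.length := by
  classical
  have hroot := H.root_eq_of_reachable
    ((H.reachable_root a).symm.trans ((H.rootPath a).1.takeUntil b hb).reachable)
  rw [(hH.subsingleton_path _ _).elim (H.rootPath b)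
    ⟨((H.rootPath a).1.takeUntil b hb).copy hroot rfl, by simpa using (H.rootPath a).2.takeUntil hb⟩]
  simpa using Walk.length_takeUntil_lt_length hb hne

lemma IsAcyclic.support_rootPath_of_adj (hH : H.IsAcyclic) {a b : X} (h : H.Adj a b) :
    (H.rootPath b).1.support = (H.rootPath a).1.support ++ [b] ∨
      (H.rootPath a).1.support = (H.rootPath b).1.support ++ [a] := by
  by_cases hb : b ∈ (H.rootPath a).1.support
  · by_cases ha : a ∈ (H.rootPath b).1.support
    · have := hH.length_rootPath_lt hb h.ne.symm
      have := hH.length_rootPath_lt ha h.ne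
      omega
    · exact .inr (hH.support_rootPath_of_notMem h.symm ha)
  · exact .inl (hH.support_rootPath_of_notMem h hb)

end RootPath

/-- `L u` plays the role of the root-to-`u` path in a rooted forest. -/
structure IsAncestorLists {U : Type*} (H : SimpleGraph U) (L : U → List U) : Prop where
  getLast?_eq (u : U) : (L u).getLast? = some u
  eq_append_of_adj {a b : U} : H.Adj a b → L b = L a ++ [b] ∨ L a = L b ++ [a]

lemma IsAcyclic.isAncestorLists_support_rootPath {X : Type*} {H : SimpleGraph X}
    (hH : H.IsAcyclic) : H.IsAncestorLists fun a => (H.rootPath a).1.support where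
  getLast?_eq a := by
    rw [List.getLast?_eq_some_getLast (Walk.support_ne_nil _), Walk.getLast_support]
  eq_append_of_adj := hH.support_rootPath_of_adj

section Sigma

variable {ι : Type*} {W : ι → Type*} (T : ∀ i, SimpleGraph (W i))

protected def sigma : SimpleGraph (Σ i, W i) :=
  ⨆ i, (T i).map (Function.Embedding.sigmaMk i)

def Copy.sigmaMk (i : ι) : Copy (T i) (SimpleGraph.sigma T) :=
  ⟨⟨Sigma.mk i, fun h => iSup_adj.mpr ⟨i, (map_adj _ _ _ _).mpr ⟨_, _, h, rfl, rfl⟩⟩⟩,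
    sigma_mk_injective⟩

variable {T}

lemma IsAncestorLists.sigma {L : ∀ i, W i → List (W i)} (hL : ∀ i, (T i).IsAncestorLists (L i)) :
    (SimpleGraph.sigma T).IsAncestorLists fun p => (L p.1 p.2).map (Sigma.mk p.1) where
  getLast?_eq p := by simp [List.getLast?_map, (hL p.1).getLast?_eq]
  eq_append_of_adj {p q} h := by
    obtain ⟨i, a, b, hab, rfl, rfl⟩ : ∃ i a b, (T i).Adj a b ∧ ⟨i, a⟩ = p ∧ ⟨i, b⟩ = q := by
      simp only [SimpleGraph.sigma, iSup_adj, map_adj] at h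
      obtain ⟨i, a, b, hab, rfl, rfl⟩ := h
      exact ⟨i, a, b, hab, rfl, rfl⟩
    rcases (hL i).eq_append_of_adj hab with h | h <;> simp [h]

end Sigma

section AncestorRank

variable {U Y : Type*} [LinearOrder Y] (L : U → List U) (j : U → Y)

def ancestorMax (u : U) : Y := ((L u).map j).foldr max (j u)

def ancestorRank (u : U) : Y ×ₗ ℕ ×ₗ Y := toLex (ancestorMax L j u, toLex ((L u).length, j u))

lemma ancestorMax_le_iff {u : U} {y : Y} :
    ancestorMax L j u ≤ y ↔ j u ≤ y ∧ ∀ a ∈ L u, j a ≤ y := by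
  unfold ancestorMax
  induction L u with
  | nil => simp
  | cons a l ih => simp only [List.map_cons, List.foldr_cons, max_le_iff, ih]; grind

lemma self_le_ancestorMax (u : U) : j u ≤ ancestorMax L j u :=
  ((ancestorMax_le_iff L j).mp le_rfl).1

lemma le_ancestorMax_of_mem {x u : U} (hx : x ∈ L u) : j x ≤ ancestorMax L j u :=
  ((ancestorMax_le_iff L j).mp le_rfl).2 x hx

lemma le_ancestorMax_of_ancestorRank_lt {u' u : U}
    (h : ancestorRank L j u' < ancestorRank L j u) : j u' ≤ ancestorMax L j u := by
  refine (self_le_ancestorMax L j u').trans ?_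
  rcases Prod.Lex.lt_iff.mp h with h | h
  · exact h.le
  · exact h.1.le

lemma ancestorRank_injective (hj : Function.Injective j) : Function.Injective (ancestorRank L j) :=
  fun _ _ h => hj (congrArg (fun r => (ofLex (ofLex r).2).2) h)

variable {H : SimpleGraph U} {L}

lemma IsAncestorLists.mem_self (hL : H.IsAncestorLists L) (u : U) : u ∈ L u :=
  List.mem_of_getLast? (hL.getLast?_eq u)

lemma IsAncestorLists.eq_of_append_eq (hL : H.IsAncestorLists L) {a a' b : U}
    (h : L a ++ [b] = L a' ++ [b]) : a = a' := by
  simpa [hL.getLast?_eq] using congrArg List.getLast? (List.append_cancel_right h)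

lemma IsAncestorLists.ancestorRank_lt (hL : H.IsAncestorLists L) {a b : U}
    (h : L b = L a ++ [b]) : ancestorRank L j a < ancestorRank L j b := by
  have hle : ∀ x ∈ L a, j x ≤ ancestorMax L j b := fun x hx =>
    le_ancestorMax_of_mem L j (by rw [h]; exact List.mem_append_left _ hx)
  have hmax : ancestorMax L j a ≤ ancestorMax L j b :=
    (ancestorMax_le_iff L j).mpr ⟨hle a (hL.mem_self a), hle⟩
  refine Prod.Lex.lt_iff.mpr (hmax.lt_or_eq.imp id fun heq => ⟨heq, ?_⟩)
  exact Prod.Lex.lt_iff.mpr (.inl (by simp [ancestorRank, h]))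

lemma IsAncestorLists.subsingleton_ancestorRank_lt_adj (hL : H.IsAncestorLists L) (u : U) :
    {a | ancestorRank L j a < ancestorRank L j u ∧ H.Adj a u}.Subsingleton := by
  have parent {a} (ha : ancestorRank L j a < ancestorRank L j u ∧ H.Adj a u) :
      L u = L a ++ [u] :=
    (hL.eq_append_of_adj ha.2).resolve_right fun h => (hL.ancestorRank_lt j h).asymm ha.1
  exact fun a ha a' ha' => hL.eq_of_append_eq ((parent ha).symm.trans (parent ha'))

end AncestorRank

theorem isContained_of_isWellOrder {U V : Type u} {H : SimpleGraph U} {G : SimpleGraph V}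
    [Nonempty V] {κ : Cardinal.{u}} (hdeg : ∀ v, κ ≤ #(G.neighborSet v))
    (r : U → U → Prop) [IsWellOrder U r] (hsmall : ∀ u, #{u' // r u' u} < κ)
    (hpred : ∀ u, {u' | r u' u ∧ H.Adj u' u}.Subsingleton) : H ⊑ G := by
  classical
  let A (u : U) (g : ∀ u', r u' u → V) : Set V :=
    if h : ∃ p, r p u ∧ H.Adj p u then G.neighborSet (g h.choose h.choose_spec.1) else .univ
  have hA (u : U) (g : ∀ u', r u' u → V) : κ ≤ #(A u g) := by
    obtain ⟨v⟩ := ‹Nonempty V›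
    unfold A
    split_ifs
    · exact hdeg _
    · exact (hdeg v).trans (mk_set_le _ |>.trans_eq mk_univ.symm)
  obtain ⟨f, hf⟩ := IsWellFounded.wf.exists_forall_mem_and_ne hsmall A hA
  have hadj {a b : U} (hab : r a b) (h : H.Adj a b) : G.Adj (f a) (f b) := by
    have hex : ∃ p, r p b ∧ H.Adj p b := ⟨a, hab, h⟩
    have hmem := (hf b).1
    simp only [A, dif_pos hex] at hmem
    rwa [hpred b hex.choose_spec ⟨hab, h⟩] at hmem
  refine ⟨⟨⟨f, fun {a b} h => ?_⟩, fun a b hfab => ?_⟩⟩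
  · rcases trichotomous_of r a b with hab | rfl | hba
    · exact hadj hab h
    · exact absurd h (H.loopless.irrefl _)
    · exact (hadj hba h.symm).symm
  · rcases trichotomous_of r a b with hab | hab | hba
    · exact absurd hfab ((hf b).2 a hab)
    · exact hab
    · exact absurd hfab.symm ((hf a).2 b hba)

theorem IsAncestorLists.isContained {U V : Type u} {H : SimpleGraph U} {L : U → List U}
    (hL : H.IsAncestorLists L) {G : SimpleGraph V} [Nonempty V] {κ : Cardinal.{u}}
    (hκ : ℵ₀ ≤ κ) (hU : #U ≤ κ) (hdeg : ∀ v, κ ≤ #(G.neighborSet v)) : H ⊑ G := by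
  obtain ⟨j⟩ : Nonempty (U ↪ κ.ord.ToType) := by rwa [← Cardinal.le_def, mk_ord_toType]
  have : IsWellOrder U ((· < ·).onFun (ancestorRank L j)) :=
    (ancestorRank_injective L j j.injective).isWellOrder _
  refine isContained_of_isWellOrder hdeg ((· < ·).onFun (ancestorRank L j)) (fun u => ?_)
    (hL.subsingleton_ancestorRank_lt_adj j)
  refine (mk_le_of_injective (f := fun p : {u' // _} =>
    (⟨j p.1, le_ancestorMax_of_ancestorRank_lt L j p.2⟩ : Set.Iic (ancestorMax L j u)))
    fun p q hpq => Subtype.ext (j.injective (congrArg Subtype.val hpq))).trans_lt ?_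
  exact mk_Iic_toType_ord_lt hκ _

end SimpleGraph

lemma SimpleGraph.Copy.disjoint_edgeSet_toSubgraph {U U' V : Type*} {A : SimpleGraph U}
    {A' : SimpleGraph U'} {G : SimpleGraph V} (f : Copy A G) (f' : Copy A' G)
    (h : Disjoint (Set.range f) (Set.range f')) :
    Disjoint f.toSubgraph.edgeSet f'.toSubgraph.edgeSet := by
  refine Set.disjoint_left.mpr fun e he he' => ?_
  induction e using Sym2.ind with
  | _ x y =>
    have hx := Subgraph.mem_verts_of_mem_edge he (Sym2.mem_mk_left x y)
    have hx' := Subgraph.mem_verts_of_mem_edge he' (Sym2.mem_mk_left x y)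
    simp only [Subgraph.map_verts, Subgraph.verts_top, Set.image_univ] at hx hx'
    exact h.ne_of_mem hx hx' rfl

theorem stmt_9_general (κ : Cardinal.{u}) (hκ : ℵ₀ ≤ κ) {V : Type u} (G : SimpleGraph V)
    (hconn : G.Connected) (hreg : G.CardRegular κ)
    (W : κ.ord.ToType → Type u) (T : ∀ i, SimpleGraph (W i))
    (hac : ∀ i, (T i).IsAcyclic)
    (hord : ∀ i, #(W i) ≤ κ) :
    ∃ F : κ.ord.ToType → G.Subgraph,
      (Pairwise fun i j => Disjoint (F i).edgeSet (F j).edgeSet) ∧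
      ∀ i, Nonempty ((F i).coe ≃g T i) := by
  have : Nonempty V := hconn.nonempty
  have hL := SimpleGraph.IsAncestorLists.sigma fun i => (hac i).isAncestorLists_support_rootPath
  obtain ⟨c⟩ := hL.isContained hκ (mk_sigma_le_of_le hκ (mk_ord_toType κ).le hord)
    fun v => (hreg v).ge
  refine ⟨fun i => (c.comp (.sigmaMk T i)).toSubgraph, fun i k hik => ?_,
    fun i => ⟨(SimpleGraph.Copy.isoToSubgraph _).symm⟩⟩
  refine SimpleGraph.Copy.disjoint_edgeSet_toSubgraph _ _ (Set.disjoint_left.mpr ?_)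
  rintro _ ⟨a, rfl⟩ ⟨b, hb⟩
  exact hik (congrArg Sigma.fst (c.injective hb)).symm

/-- Every family of `κ` forests without isolated vertices, each of order at most `κ`,
packs into every connected `κ`-regular graph. -/
theorem stmt_9 (κ : Cardinal.{u}) (hκ : ℵ₀ ≤ κ) {V : Type u} (G : SimpleGraph V)
    (hconn : G.Connected) (hreg : G.CardRegular κ)
    (W : κ.ord.ToType → Type u) (T : ∀ i, SimpleGraph (W i))
    (hac : ∀ i, (T i).IsAcyclic) (hni : ∀ i, (T i).NoIsolatedVerts)
    (hord : ∀ i, #(W i) ≤ κ) :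
    ∃ F : κ.ord.ToType → G.Subgraph,
      (Pairwise fun i j => Disjoint (F i).edgeSet (F j).edgeSet) ∧
      ∀ i, Nonempty ((F i).coe ≃g T i) :=
  stmt_9_general κ hκ G hconn hreg W T hac hord
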